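/- arXiv:2502.03267 — 2 statements merged into one kernel-verified Lean document; each statement's English description precedes it below -/
import Mathlib

section
/- Let n ≥ 1, δ ∈ (0, n], and let f ∈ nL¹(ℝⁿ, H̃^δ_∞). Then f is an nL¹-limit of continuous functions if and only if f is H̃^δ_∞-quasicontinuous. -/
open MeasureTheory Set Metric Filter Topology
open scoped ENNReal

noncomputable section

/-- Euclidean space `ℝⁿ`. -/
abbrev En (n : ℕ) : Type := EuclideanSpace ℝ (Fin n)

/-- The half-open dyadic cube `2^k (m + [0,1)ⁿ)`, `k : ℤ`, `m : ℤⁿ`. -/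
def dyadicCube (n : ℕ) (k : ℤ) (m : Fin n → ℤ) : Set (En n) :=
  {x | ∀ i, (m i : ℝ) * 2 ^ k ≤ x i ∧ x i < ((m i : ℝ) + 1) * 2 ^ k}

/-- The `δ`-dimensional dyadic Hausdorff content `H̃^δ_∞`: the infimum of `Σ ℓ(Q_i)^δ`
over all countable collections of dyadic cubes whose union's interior covers `E`. -/
def dyadicContent (n : ℕ) (δ : ℝ) (E : Set (En n)) : ℝ≥0∞ :=
  ⨅ (c : ℕ → ℤ × (Fin n → ℤ))
    (_ : E ⊆ interior (⋃ i, dyadicCube n (c i).1 (c i).2)),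
    ∑' i, ENNReal.ofReal (((2 : ℝ) ^ (c i).1) ^ δ)

/-- The Choquet integral `∫_Ω f dH̃^δ_∞ := ∫_0^∞ H̃^δ_∞({x ∈ Ω : f x > t}) dt`
of a `[0,∞]`-valued function over `Ω ⊆ ℝⁿ`. -/
def choquetIntegral (n : ℕ) (δ : ℝ) (Ω : Set (En n)) (f : En n → ℝ≥0∞) : ℝ≥0∞ :=
  ∫⁻ t in Ioi (0 : ℝ), dyadicContent n δ {x | x ∈ Ω ∧ ENNReal.ofReal t < f x}

/-- The Choquet integral `∫_Ω |f| dH̃^δ_∞` of a real-valued function. -/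
def choquetIntegralAbs (n : ℕ) (δ : ℝ) (Ω : Set (En n)) (f : En n → ℝ) : ℝ≥0∞ :=
  choquetIntegral n δ Ω (fun x => ENNReal.ofReal |f x|)

/-- The Choquet integral `∫_Ω |f| dH̃^δ_∞` of an extended-real-valued function. -/
def choquetIntegralEAbs (n : ℕ) (δ : ℝ) (Ω : Set (En n)) (f : En n → EReal) : ℝ≥0∞ :=
  choquetIntegral n δ Ω (fun x => (f x).abs)

/-- The ball average `f^δ_{B(x,r)} := (1/H̃^δ_∞(B(x,r))) ∫_{B(x,r)} f dH̃^δ_∞`. -/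
def ballAvg (n : ℕ) (δ : ℝ) (f : En n → ℝ≥0∞) (x : En n) (r : ℝ) : ℝ≥0∞ :=
  choquetIntegral n δ (ball x r) f / dyadicContent n δ (ball x r)

/-- The Hausdorff-content centred maximal function `M^δ f(x)`. -/
def maximal (n : ℕ) (δ : ℝ) (f : En n → ℝ≥0∞) (x : En n) : ℝ≥0∞ :=
  ⨆ (r : ℝ) (_ : 0 < r), ballAvg n δ f x r

/-- `f^δ_*(x) := limsup_{r→0⁺} (1/H̃^δ_∞(B(x,r))) ∫_{B(x,r)} |f(y) − f(x)| dH̃^δ_∞(y)`. -/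
def lebDev (n : ℕ) (δ : ℝ) (f : En n → ℝ) (x : En n) : ℝ≥0∞ :=
  limsup (fun r : ℝ => choquetIntegralAbs n δ (ball x r) (fun y => f y - f x) /
    dyadicContent n δ (ball x r)) (𝓝[>] (0 : ℝ))

/-- `limsup_{r→0⁺} f^δ_{B(x,r)}` of the ball averages. -/
def limsupAvg (n : ℕ) (δ : ℝ) (f : En n → ℝ≥0∞) (x : En n) : ℝ≥0∞ :=
  limsup (fun r : ℝ => ballAvg n δ f x r) (𝓝[>] (0 : ℝ))

/-!
Both directions run through the distribution function `t ↦ H̃^δ_∞{|f| > t}`, whose Lebesgue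
integral over `(0, ∞)` is the Choquet integral of `|f|`.

If `∫ |f - φᵢ| → 0`, Chebyshev's inequality lets us pick `i_j` with `{|f - φ_{i_j}| > 1/(j+1)}`
of content `< ε_j`, where `Σ ε_j < ε`. Covering these sets by open sets of content `< ε_j` and
using countable subadditivity, their union `O` has content `< ε`, and off `O` the continuous
`φ_{i_j}` converge to `f` uniformly.

Conversely, if `f` is continuous off an open `O`, extend `f|_{Oᶜ}` by Tietze and truncate it at
height `M` to get a continuous `g`. Then `|f - g| > s` forces either `x ∈ O` and `|f x| > s - M`,
or `|f x| > s + M`, whence `∫ |f - g| ≤ 2M H̃^δ_∞(O) + 2 ∫_M^∞ H̃^δ_∞{|f| > t} dt`. Finiteness of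
`∫ |f|` makes the tail small for large `M`, and quasicontinuity then makes `H̃^δ_∞(O)` small.
-/

section DyadicContent

variable {n : ℕ} {δ : ℝ}

theorem dyadicContent_mono {E F : Set (En n)} (h : E ⊆ F) :
    dyadicContent n δ E ≤ dyadicContent n δ F :=
  le_iInf₂ fun c hc => iInf₂_le c (h.trans hc)

theorem dyadicContent_le_of_subset_interior {E : Set (En n)} {c : ℕ → ℤ × (Fin n → ℤ)}
    (hc : E ⊆ interior (⋃ i, dyadicCube n (c i).1 (c i).2)) :
    dyadicContent n δ E ≤ ∑' i, ENNReal.ofReal (((2 : ℝ) ^ (c i).1) ^ δ) :=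
  iInf₂_le c hc

theorem exists_cover_of_dyadicContent_lt {E : Set (En n)} {b : ℝ≥0∞}
    (h : dyadicContent n δ E < b) :
    ∃ c : ℕ → ℤ × (Fin n → ℤ), E ⊆ interior (⋃ i, dyadicCube n (c i).1 (c i).2) ∧
      ∑' i, ENNReal.ofReal (((2 : ℝ) ^ (c i).1) ^ δ) < b := by
  obtain ⟨c, hc⟩ := iInf_lt_iff.mp h
  obtain ⟨hcover, hsum⟩ := iInf_lt_iff.mp hc
  exact ⟨c, hcover, hsum⟩

theorem exists_isOpen_superset_dyadicContent_lt {E : Set (En n)} {b : ℝ≥0∞}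
    (h : dyadicContent n δ E < b) :
    ∃ U : Set (En n), IsOpen U ∧ E ⊆ U ∧ dyadicContent n δ U < b := by
  obtain ⟨c, hcover, hsum⟩ := exists_cover_of_dyadicContent_lt h
  exact ⟨_, isOpen_interior, hcover, (dyadicContent_le_of_subset_interior subset_rfl).trans_lt hsum⟩

theorem dyadicContent_iUnion_le {ι : Type*} [Countable ι] [Nonempty ι] (E : ι → Set (En n)) :
    dyadicContent n δ (⋃ j, E j) ≤ ∑' j, dyadicContent n δ (E j) := by
  refine ENNReal.le_of_forall_pos_le_add fun ε hε hfin => ?_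
  obtain ⟨ε', hε'0, hε'⟩ := ENNReal.exists_pos_sum_of_countable (ENNReal.coe_ne_zero.mpr hε.ne') ι
  have hcovers : ∀ j, ∃ c : ℕ → ℤ × (Fin n → ℤ),
      E j ⊆ interior (⋃ i, dyadicCube n (c i).1 (c i).2) ∧
      ∑' i, ENNReal.ofReal (((2 : ℝ) ^ (c i).1) ^ δ) < dyadicContent n δ (E j) + ε' j :=
    fun j => exists_cover_of_dyadicContent_lt <| ENNReal.lt_add_right
      (ENNReal.ne_top_of_tsum_ne_top hfin.ne j) (ENNReal.coe_ne_zero.mpr (hε'0 j).ne')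
  choose C hCcover hCsum using hcovers
  obtain ⟨_⟩ := nonempty_denumerable (ι × ℕ)
  let e := Denumerable.eqv (ι × ℕ)
  have hcover : (⋃ j, E j) ⊆
      interior (⋃ k, dyadicCube n (C (e.symm k).1 (e.symm k).2).1
        (C (e.symm k).1 (e.symm k).2).2) := by
    refine iUnion_subset fun j => (hCcover j).trans (interior_mono (iUnion_subset fun i => ?_))
    exact subset_iUnion_of_subset (e (j, i)) (by simp)
  calc dyadicContent n δ (⋃ j, E j)
      ≤ ∑' k, ENNReal.ofReal (((2 : ℝ) ^ (C (e.symm k).1 (e.symm k).2).1) ^ δ) :=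
        dyadicContent_le_of_subset_interior hcover
    _ = ∑' j, ∑' i, ENNReal.ofReal (((2 : ℝ) ^ (C j i).1) ^ δ) :=
        (e.symm.tsum_eq fun p => ENNReal.ofReal (((2 : ℝ) ^ (C p.1 p.2).1) ^ δ)).trans
          (ENNReal.tsum_prod (f := fun j i => ENNReal.ofReal (((2 : ℝ) ^ (C j i).1) ^ δ)))
    _ ≤ ∑' j, (dyadicContent n δ (E j) + ε' j) := ENNReal.tsum_le_tsum fun j => (hCsum j).le
    _ ≤ ∑' j, dyadicContent n δ (E j) + ε := by
        rw [ENNReal.tsum_add]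
        exact add_le_add_right hε'.le _

theorem dyadicContent_union_le (A B : Set (En n)) :
    dyadicContent n δ (A ∪ B) ≤ dyadicContent n δ A + dyadicContent n δ B := by
  rw [union_eq_iUnion, add_comm]
  exact (dyadicContent_iUnion_le _).trans_eq (tsum_bool _)

end DyadicContent

theorem setLIntegral_Ioi_comp_add_right (g : ℝ → ℝ≥0∞) (a b : ℝ) :
    ∫⁻ t in Ioi a, g (t + b) = ∫⁻ t in Ioi (a + b), g t := by
  have h := (measurePreserving_add_right volume b).setLIntegral_comp_preimage_emb
    (measurableEmbedding_addRight b) g (Ioi (a + b))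
  rwa [preimage_add_const_Ioi, add_sub_cancel_right] at h

theorem tendsto_setLIntegral_Ioi_atTop {g : ℝ → ℝ≥0∞} {a : ℝ}
    (hg : ∫⁻ t in Ioi a, g t ≠ ∞) :
    Tendsto (fun M => ∫⁻ t in Ioi M, g t) atTop (𝓝 0) := by
  have hlim := tendsto_measure_iInter_atTop (μ := volume.withDensity g)
    (fun M => measurableSet_Ioi.nullMeasurableSet) (fun _ _ h => Ioi_subset_Ioi h)
    ⟨a, by rwa [withDensity_apply _ measurableSet_Ioi]⟩
  have hempty : ⋂ M : ℝ, Ioi M = ∅ := iInter_eq_empty_iff.mpr fun x => ⟨x, lt_irrefl x⟩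
  rw [hempty, measure_empty] at hlim
  exact hlim.congr fun M => withDensity_apply _ measurableSet_Ioi

theorem setLIntegral_Ioi_le_of_le_min_add {d e : ℝ → ℝ≥0∞} (hd : Antitone d) {c : ℝ≥0∞}
    {M : ℝ} (hM : 0 ≤ M) (he : ∀ s > 0, e s ≤ min c (d (s - M)) + d (s + M)) :
    ∫⁻ s in Ioi 0, e s ≤ ENNReal.ofReal (2 * M) * c + 2 * ∫⁻ t in Ioi M, d t := by
  have hmin : Measurable fun s => min c (d (s - M)) :=
    measurable_const.min (hd.measurable.comp (measurable_id.sub_const M))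
  have hsplit : ∫⁻ s in Ioi 0, min c (d (s - M)) ≤
      ENNReal.ofReal (2 * M) * c + ∫⁻ t in Ioi M, d t := by
    rw [← Ioc_union_Ioi_eq_Ioi (by positivity : (0 : ℝ) ≤ 2 * M),
      lintegral_union measurableSet_Ioi Ioc_disjoint_Ioi_same]
    refine add_le_add ?_ ?_
    · calc ∫⁻ s in Ioc 0 (2 * M), min c (d (s - M)) ≤ ∫⁻ _ in Ioc 0 (2 * M), c :=
            lintegral_mono fun s => min_le_left _ _
        _ = ENNReal.ofReal (2 * M) * c := by
            rw [setLIntegral_const, Real.volume_Ioc, sub_zero, mul_comm]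
    · calc ∫⁻ s in Ioi (2 * M), min c (d (s - M)) ≤ ∫⁻ s in Ioi (2 * M), d (s + -M) :=
            lintegral_mono fun s => (min_le_right _ _).trans_eq (by rw [sub_eq_add_neg])
        _ = ∫⁻ t in Ioi M, d t := by
            rw [setLIntegral_Ioi_comp_add_right, two_mul, add_neg_cancel_right]
  calc ∫⁻ s in Ioi 0, e s ≤ ∫⁻ s in Ioi 0, (min c (d (s - M)) + d (s + M)) :=
        setLIntegral_mono (hmin.add (hd.measurable.comp (measurable_id.add_const M)))
          he
    _ = (∫⁻ s in Ioi 0, min c (d (s - M))) + ∫⁻ t in Ioi M, d t := by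
        rw [lintegral_add_left hmin, setLIntegral_Ioi_comp_add_right, zero_add]
    _ ≤ ENNReal.ofReal (2 * M) * c + (∫⁻ t in Ioi M, d t) + ∫⁻ t in Ioi M, d t :=
        add_le_add_left hsplit _
    _ = ENNReal.ofReal (2 * M) * c + 2 * ∫⁻ t in Ioi M, d t := by
        rw [add_assoc, ← two_mul]

section Distribution

variable {n : ℕ} {δ : ℝ}

def contentDistribution (n : ℕ) (δ : ℝ) (f : En n → ℝ) (t : ℝ) : ℝ≥0∞ :=
  dyadicContent n δ {x | t < |f x|}

theorem antitone_contentDistribution (f : En n → ℝ) : Antitone (contentDistribution n δ f) :=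
  fun _ _ hst => dyadicContent_mono fun _ hx => hst.trans_lt hx

theorem choquetIntegralAbs_univ_eq_lintegral (f : En n → ℝ) :
    choquetIntegralAbs n δ univ f = ∫⁻ t in Ioi 0, contentDistribution n δ f t := by
  refine setLIntegral_congr_fun measurableSet_Ioi fun t ht => ?_
  simp only [contentDistribution, mem_univ, true_and, ENNReal.ofReal_lt_ofReal_iff_of_nonneg ht.le]

theorem ofReal_mul_contentDistribution_le (f : En n → ℝ) (t : ℝ) :
    ENNReal.ofReal t * contentDistribution n δ f t ≤ choquetIntegralAbs n δ univ f := by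
  rw [choquetIntegralAbs_univ_eq_lintegral]
  calc ENNReal.ofReal t * contentDistribution n δ f t
      = ∫⁻ _ in Ioc 0 t, contentDistribution n δ f t := by
        rw [setLIntegral_const, Real.volume_Ioc, sub_zero, mul_comm]
    _ ≤ ∫⁻ s in Ioc 0 t, contentDistribution n δ f s :=
        setLIntegral_mono' measurableSet_Ioc fun s hs => antitone_contentDistribution f hs.2
    _ ≤ ∫⁻ s in Ioi 0, contentDistribution n δ f s := lintegral_mono_set Ioc_subset_Ioi_self

theorem tendsto_contentDistribution_of_tendsto_choquetIntegralAbs {ι : Type*} {l : Filter ι}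
    {F : ι → En n → ℝ} (hF : Tendsto (fun i => choquetIntegralAbs n δ univ (F i)) l (𝓝 0))
    {t : ℝ} (ht : 0 < t) :
    Tendsto (fun i => contentDistribution n δ (F i) t) l (𝓝 0) := by
  have hpos : ENNReal.ofReal t ≠ 0 := (ENNReal.ofReal_pos.mpr ht).ne'
  refine tendsto_of_tendsto_of_tendsto_of_le_of_le tendsto_const_nhds
    (by simpa using ENNReal.Tendsto.div_const hF (Or.inr hpos)) (fun _ => zero_le) fun i => ?_
  rw [ENNReal.le_div_iff_mul_le (Or.inl hpos) (Or.inl ENNReal.ofReal_ne_top), mul_comm]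
  exact ofReal_mul_contentDistribution_le (F i) t

end Distribution

section Approximation

variable {n : ℕ} {δ : ℝ}

def truncate (M y : ℝ) : ℝ := max (-M) (min y M)

theorem continuous_truncate (M : ℝ) : Continuous (truncate M) :=
  continuous_const.max (continuous_id.min continuous_const)

theorem abs_truncate_le {M : ℝ} (hM : 0 ≤ M) (y : ℝ) : |truncate M y| ≤ M :=
  abs_le.mpr ⟨le_max_left _ _, max_le (by linarith) (min_le_right _ _)⟩

theorem add_lt_abs_of_lt_abs_sub_truncate {M s y : ℝ} (hs : 0 < s)
    (h : s < |y - truncate M y|) : s + M < |y| := by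
  unfold truncate at h
  rcases le_total y M with h1 | h1 <;> rcases le_total (-M) y with h2 | h2 <;>
    simp_all [lt_abs] <;> grind

theorem exists_continuous_abs_le_eqOn_truncate {X : Type*} [TopologicalSpace X] [NormalSpace X]
    {f : X → ℝ} {O : Set X} (hO : IsOpen O) (hf : Continuous (Oᶜ.domRestrict f)) {M : ℝ}
    (hM : 0 ≤ M) :
    ∃ g : X → ℝ, Continuous g ∧ (∀ x, |g x| ≤ M) ∧ EqOn g (fun x => truncate M (f x)) Oᶜ := by
  obtain ⟨G, hG⟩ := ContinuousMap.exists_restrict_eq hO.isClosed_compl ⟨Oᶜ.domRestrict f, hf⟩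
  refine ⟨truncate M ∘ G, (continuous_truncate M).comp G.continuous,
    fun x => abs_truncate_le hM _, fun x hx => ?_⟩
  rw [Function.comp_apply, ← ContinuousMap.restrict_apply_mk G Oᶜ x hx, hG]
  rfl

theorem contentDistribution_sub_le {f g : En n → ℝ} {O : Set (En n)} {M : ℝ}
    (hg : ∀ x, |g x| ≤ M) (hfg : EqOn g (fun x => truncate M (f x)) Oᶜ) {s : ℝ} (hs : 0 < s) :
    contentDistribution n δ (fun x => f x - g x) s ≤
      min (dyadicContent n δ O) (contentDistribution n δ f (s - M)) +
        contentDistribution n δ f (s + M) := by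
  have hsub : {x | s < |f x - g x|} ⊆ (O ∩ {x | s - M < |f x|}) ∪ {x | s + M < |f x|} := by
    intro x (hx : s < |f x - g x|)
    by_cases hxO : x ∈ O
    · have := abs_sub (f x) (g x)
      have := hg x
      exact Or.inl ⟨hxO, show s - M < |f x| by linarith⟩
    · rw [hfg hxO] at hx
      exact Or.inr (add_lt_abs_of_lt_abs_sub_truncate hs hx)
  calc contentDistribution n δ (fun x => f x - g x) s
      ≤ dyadicContent n δ (O ∩ {x | s - M < |f x|}) + contentDistribution n δ f (s + M) :=
        (dyadicContent_mono hsub).trans (dyadicContent_union_le _ _)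
    _ ≤ min (dyadicContent n δ O) (contentDistribution n δ f (s - M)) +
          contentDistribution n δ f (s + M) := by
        gcongr
        exact le_min (dyadicContent_mono inter_subset_left) (dyadicContent_mono inter_subset_right)

theorem exists_continuous_choquetIntegralAbs_sub_le {f : En n → ℝ} {O : Set (En n)}
    (hO : IsOpen O) (hf : Continuous (Oᶜ.domRestrict f)) {M : ℝ} (hM : 0 ≤ M) :
    ∃ g : En n → ℝ, Continuous g ∧
      choquetIntegralAbs n δ univ (fun x => f x - g x) ≤
        ENNReal.ofReal (2 * M) * dyadicContent n δ O +
          2 * ∫⁻ t in Ioi M, contentDistribution n δ f t := by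
  obtain ⟨g, hg, hgM, hgf⟩ := exists_continuous_abs_le_eqOn_truncate hO hf hM
  refine ⟨g, hg, ?_⟩
  rw [choquetIntegralAbs_univ_eq_lintegral]
  exact setLIntegral_Ioi_le_of_le_min_add (antitone_contentDistribution f) hM
    fun s hs => contentDistribution_sub_le hgM hgf hs

theorem exists_continuous_choquetIntegralAbs_sub_lt {f : En n → ℝ}
    (hf : choquetIntegralAbs n δ univ f ≠ ∞)
    (hq : ∀ ε : ℝ, 0 < ε → ∃ O : Set (En n), IsOpen O ∧
      dyadicContent n δ O < ENNReal.ofReal ε ∧ Continuous (Oᶜ.domRestrict f))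
    {ε : ℝ≥0∞} (hε : 0 < ε) :
    ∃ g : En n → ℝ, Continuous g ∧ choquetIntegralAbs n δ univ (fun x => f x - g x) < ε := by
  have hε2 : 0 < ε / 2 := ENNReal.half_pos hε.ne'
  have htail : Tendsto (fun M => 2 * ∫⁻ t in Ioi M, contentDistribution n δ f t) atTop (𝓝 0) := by
    rw [choquetIntegralAbs_univ_eq_lintegral] at hf
    simpa using ENNReal.Tendsto.const_mul (tendsto_setLIntegral_Ioi_atTop hf)
      (Or.inr ENNReal.ofNat_ne_top)
  obtain ⟨M, hM, hMtail⟩ := ((eventually_ge_atTop 0).and (htail.eventually_lt_const hε2)).exists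
  obtain ⟨η, -, hη, hηlt⟩ := ENNReal.lt_iff_exists_real_btwn.mp
    (ENNReal.div_pos hε2.ne' ENNReal.ofReal_ne_top : 0 < ε / 2 / ENNReal.ofReal (2 * M))
  obtain ⟨O, hO, hOη, hfO⟩ := hq η (ENNReal.ofReal_pos.mp hη)
  obtain ⟨g, hg, hfg⟩ := exists_continuous_choquetIntegralAbs_sub_le (δ := δ) hO hfO hM
  refine ⟨g, hg, hfg.trans_lt ?_⟩
  calc ENNReal.ofReal (2 * M) * dyadicContent n δ O +
        2 * ∫⁻ t in Ioi M, contentDistribution n δ f t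
      < ε / 2 + ε / 2 :=
        ENNReal.add_lt_add (ENNReal.mul_lt_of_lt_div' (hOη.trans hηlt)) hMtail
    _ = ε := ENNReal.add_halves ε

theorem exists_isOpen_dyadicContent_lt_continuous_domRestrict {f : En n → ℝ} {φ : ℕ → En n → ℝ}
    (hφ : ∀ i, Continuous (φ i))
    (hlim : Tendsto (fun i => choquetIntegralAbs n δ univ (fun x => f x - φ i x)) atTop (𝓝 0))
    {ε : ℝ≥0∞} (hε : ε ≠ 0) :
    ∃ O : Set (En n), IsOpen O ∧ dyadicContent n δ O < ε ∧ Continuous (Oᶜ.domRestrict f) := by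
  obtain ⟨ε', hε'0, hε'⟩ := ENNReal.exists_pos_sum_of_countable hε ℕ
  have hsmall : ∀ j : ℕ, ∃ i,
      contentDistribution n δ (fun x => f x - φ i x) (1 / (j + 1)) < ε' j := fun j =>
    ((tendsto_contentDistribution_of_tendsto_choquetIntegralAbs hlim Nat.one_div_pos_of_nat
      ).eventually_lt_const (ENNReal.coe_pos.mpr (hε'0 j))).exists
  choose idx hidx using hsmall
  choose U hU hsubU hUsmall using fun j => exists_isOpen_superset_dyadicContent_lt (hidx j)
  refine ⟨⋃ j, U j, isOpen_iUnion hU, ?_, ?_⟩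
  · calc dyadicContent n δ (⋃ j, U j) ≤ ∑' j, dyadicContent n δ (U j) := dyadicContent_iUnion_le U
      _ ≤ ∑' j, (ε' j : ℝ≥0∞) := ENNReal.tsum_le_tsum fun j => (hUsmall j).le
      _ < ε := hε'
  have hclose : ∀ j : ℕ, ∀ x ∉ ⋃ j, U j, |f x - φ (idx j) x| ≤ 1 / (j + 1) :=
    fun j x hx => not_lt.mp fun h => hx (mem_iUnion.mpr ⟨j, hsubU j h⟩)
  have hunif : TendstoUniformlyOn (fun j => φ (idx j)) f atTop (⋃ j, U j)ᶜ := by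
    refine Metric.tendstoUniformlyOn_iff.mpr fun η hη => ?_
    obtain ⟨j₀, hj₀⟩ := exists_nat_one_div_lt hη
    filter_upwards [eventually_ge_atTop j₀] with j hj x hx
    calc dist (f x) (φ (idx j) x) ≤ 1 / (j + 1) := hclose j x hx
      _ ≤ 1 / (j₀ + 1) := Nat.one_div_le_one_div hj
      _ < η := hj₀
  exact continuousOn_iff_continuous_domRestrict.mp
    (hunif.continuousOn (Frequently.of_forall fun j => (hφ (idx j)).continuousOn))

end Approximation

theorem nL1_limit_iff_quasicontinuous_general (n : ℕ) (δ : ℝ)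
    (f : En n → ℝ) (hf : choquetIntegralAbs n δ univ f < ⊤) :
    (∃ φ : ℕ → En n → ℝ, (∀ i, Continuous (φ i)) ∧
      Tendsto (fun i => choquetIntegralAbs n δ univ (fun x => f x - φ i x))
        atTop (𝓝 0)) ↔
    (∀ ε : ℝ, 0 < ε → ∃ O : Set (En n), IsOpen O ∧
      dyadicContent n δ O < ENNReal.ofReal ε ∧ Continuous (Oᶜ.restrict f)) := by
  constructor
  · rintro ⟨φ, hφ, hlim⟩ ε hε
    exact exists_isOpen_dyadicContent_lt_continuous_domRestrict hφ hlim
      (ENNReal.ofReal_pos.mpr hε).ne'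
  · intro hq
    choose g hg hfg using fun i : ℕ =>
      exists_continuous_choquetIntegralAbs_sub_lt hf.ne hq
        (ENNReal.inv_pos.mpr (ENNReal.natCast_ne_top i))
    exact ⟨g, hg, tendsto_of_tendsto_of_tendsto_of_le_of_le tendsto_const_nhds
      ENNReal.tendsto_inv_nat_nhds_zero (fun _ => zero_le) fun i => (hfg i).le⟩

/-- `f ∈ nL¹(ℝⁿ, H̃^δ_∞)` is an `nL¹`-limit of continuous functions
if and only if `f` is `H̃^δ_∞`-quasicontinuous. -/
theorem nL1_limit_iff_quasicontinuous (n : ℕ) (hn : 1 ≤ n)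
    (δ : ℝ) (hδ0 : 0 < δ) (hδn : δ ≤ n)
    (f : En n → ℝ) (hf : choquetIntegralAbs n δ univ f < ⊤) :
    (∃ φ : ℕ → En n → ℝ, (∀ i, Continuous (φ i)) ∧
      Tendsto (fun i => choquetIntegralAbs n δ univ (fun x => f x - φ i x))
        atTop (𝓝 0)) ↔
    (∀ ε : ℝ, 0 < ε → ∃ O : Set (En n), IsOpen O ∧
      dyadicContent n δ O < ENNReal.ofReal ε ∧ Continuous (Oᶜ.restrict f)) :=
  nL1_limit_iff_quasicontinuous_general n δ f hf
end
end

section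
/- Let n ≥ 1 and suppose f ∈ nL¹(ℝⁿ, H̃^n_∞) is Lebesgue measurable. Then limsup_{r→0⁺} (1/H̃^n_∞(B(x,r))) ∫_{B(x,r)} |f(y) − f(x)| dH̃^n_∞(y) = 0 for H̃^n_∞-almost every x ∈ ℝⁿ; and if moreover f is nonnegative, then f(x) = limsup_{r→0⁺} (1/H̃^n_∞(B(x,r))) ∫_{B(x,r)} f(y) dH̃^n_∞(y) for H̃^n_∞-almost every x ∈ ℝⁿ. -/
/-!
For `n ≥ 1` the dyadic content `H̃^n_∞` is Lebesgue outer measure: it is at least the volume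
because a dyadic cube of side `ℓ` has volume `ℓ^n`. Conversely, an open set `U` of finite volume
is the disjoint union of its maximal dyadic cubes (they exist because for `n ≥ 1` large cubes have
large volume), so `H̃^n_∞(U) ≤ |U|`, and outer regularity of Lebesgue measure does the rest.
By the layer cake formula the Choquet integrals are then Lebesgue integrals, so `f ∈ L¹`, and the
theorem is the Lebesgue differentiation theorem on balls; the second part follows from
`|⨍_B f - f(x)| ≤ ⨍_B |f - f(x)|`.
-/

open MeasureTheory Set Metric Filter Topology
open scoped ENNReal

noncomputable section

lemma dyadicCube_eq_preimage (n : ℕ) (k : ℤ) (m : Fin n → ℤ) :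
    dyadicCube n k m = (MeasurableEquiv.toLp 2 (Fin n → ℝ)).symm ⁻¹'
      univ.pi fun i => Ico ((m i : ℝ) * 2 ^ k) (((m i : ℝ) + 1) * 2 ^ k) := by
  ext x
  simp [dyadicCube, MeasurableEquiv.coe_toLp_symm, Set.mem_pi]

lemma measurableSet_dyadicCube (n : ℕ) (k : ℤ) (m : Fin n → ℤ) :
    MeasurableSet (dyadicCube n k m) := by
  rw [dyadicCube_eq_preimage]
  exact (MeasurableEquiv.toLp 2 (Fin n → ℝ)).symm.measurable
    (MeasurableSet.univ_pi fun _ => measurableSet_Ico)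

lemma volume_dyadicCube (n : ℕ) (k : ℤ) (m : Fin n → ℤ) :
    volume (dyadicCube n k m) = ENNReal.ofReal (((2 : ℝ) ^ k) ^ (n : ℝ)) := by
  rw [dyadicCube_eq_preimage,
    (EuclideanSpace.volume_preserving_symm_measurableEquiv_toLp (Fin n)).measure_preimage
      (MeasurableSet.univ_pi fun _ => measurableSet_Ico).nullMeasurableSet,
    volume_pi_pi]
  simp only [Real.volume_Ico, add_mul, one_mul, add_sub_cancel_left, Finset.prod_const,
    Finset.card_univ, Fintype.card_fin, Real.rpow_natCast]
  rw [ENNReal.ofReal_pow (by positivity)]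

def dyadicIndex (n : ℕ) (k : ℤ) (x : En n) : Fin n → ℤ := fun i => ⌊x i / 2 ^ k⌋

lemma mem_dyadicCube_iff {n : ℕ} {k : ℤ} {m : Fin n → ℤ} {x : En n} :
    x ∈ dyadicCube n k m ↔ dyadicIndex n k x = m := by
  have h2 : (0 : ℝ) < 2 ^ k := by positivity
  simp only [dyadicCube, mem_ofPred_eq, funext_iff, dyadicIndex, Int.floor_eq_iff,
    le_div_iff₀ h2, div_lt_iff₀ h2]

lemma dyadicIndex_eq_of_le {n : ℕ} {k j : ℤ} {x z : En n}
    (h : dyadicIndex n k z = dyadicIndex n k x) (hkj : k ≤ j) :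
    dyadicIndex n j z = dyadicIndex n j x := by
  have hdiv : ∀ y : En n, dyadicIndex n j y = fun i => dyadicIndex n k y i / 2 ^ (j - k).toNat := by
    intro y
    funext i
    have hpow : (2 : ℝ) ^ j = 2 ^ k * ((2 ^ (j - k).toNat : ℤ) : ℝ) := by
      rw [Int.cast_pow, Int.cast_ofNat, ← zpow_natCast, Int.toNat_of_nonneg (by omega),
        ← zpow_add₀ two_ne_zero, add_sub_cancel]
    rw [dyadicIndex, dyadicIndex, hpow, ← div_div, Int.floor_div_cast_of_nonneg (by positivity)]
  rw [hdiv, hdiv, h]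

lemma exists_two_zpow_lt {ε : ℝ} (hε : 0 < ε) : ∃ k : ℤ, (2 : ℝ) ^ k < ε := by
  obtain ⟨j, hj⟩ := exists_pow_lt_of_lt_one hε one_half_lt_one
  exact ⟨-j, by simpa [zpow_neg, inv_pow] using hj⟩

lemma dist_le_of_mem_dyadicCube {n : ℕ} {k : ℤ} {m : Fin n → ℤ} {y z : En n}
    (hy : y ∈ dyadicCube n k m) (hz : z ∈ dyadicCube n k m) :
    dist y z ≤ Real.sqrt n * 2 ^ k := by
  have hcoord : ∀ i, dist (y i) (z i) ^ 2 ≤ ((2 : ℝ) ^ k) ^ 2 := fun i => by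
    obtain ⟨hy₁, hy₂⟩ := hy i
    obtain ⟨hz₁, hz₂⟩ := hz i
    rw [Real.dist_eq]
    exact pow_le_pow_left₀ (abs_nonneg _) (abs_sub_lt_iff.2 ⟨by linarith, by linarith⟩).le 2
  calc dist y z = Real.sqrt (∑ i, dist (y i) (z i) ^ 2) := EuclideanSpace.dist_eq y z
    _ ≤ Real.sqrt (∑ _i : Fin n, ((2 : ℝ) ^ k) ^ 2) :=
        Real.sqrt_le_sqrt (Finset.sum_le_sum fun i _ => hcoord i)
    _ = Real.sqrt n * 2 ^ k := by
        simp [Real.sqrt_mul (Nat.cast_nonneg n), Real.sqrt_sq (by positivity : (0 : ℝ) ≤ 2 ^ k)]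

lemma exists_dyadicCube_subset_ball {n : ℕ} (x : En n) {ε : ℝ} (hε : 0 < ε) :
    ∃ k : ℤ, dyadicCube n k (dyadicIndex n k x) ⊆ ball x ε := by
  have hsqrt : 0 < Real.sqrt n + 1 := by positivity
  obtain ⟨k, hk⟩ := exists_two_zpow_lt (div_pos hε hsqrt)
  refine ⟨k, fun y hy => mem_ball.2 ?_⟩
  calc dist y x ≤ Real.sqrt n * 2 ^ k :=
        dist_le_of_mem_dyadicCube hy (mem_dyadicCube_iff.2 rfl)
    _ ≤ (Real.sqrt n + 1) * 2 ^ k := by gcongr; linarith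
    _ < ε := by rw [lt_div_iff₀ hsqrt] at hk; linarith

lemma exists_forall_lt_volume_dyadicCube {n : ℕ} (hn : 1 ≤ n) {A : ℝ≥0∞} (hA : A ≠ ⊤) :
    ∃ b : ℤ, ∀ k ≥ b, ∀ m, A < volume (dyadicCube n k m) := by
  obtain ⟨b, hb⟩ := pow_unbounded_of_one_lt A.toReal one_lt_two
  refine ⟨b, fun k hk m => ?_⟩
  have h1 : (1 : ℝ) ≤ 2 ^ k := one_le_zpow₀ one_le_two (by omega)
  rw [volume_dyadicCube, ← ENNReal.ofReal_toReal hA, ENNReal.ofReal_lt_ofReal_iff (by positivity),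
    Real.rpow_natCast]
  calc A.toReal < 2 ^ b := hb
    _ = (2 : ℝ) ^ (b : ℤ) := (zpow_natCast 2 b).symm
    _ ≤ 2 ^ k := zpow_le_zpow_right₀ one_le_two hk
    _ ≤ (2 ^ k) ^ n := le_self_pow₀ h1 (by omega)

def dyadicScalesInside (n : ℕ) (U : Set (En n)) (x : En n) : Set ℤ :=
  {k | dyadicCube n k (dyadicIndex n k x) ⊆ U}

def maximalDyadicCubes (n : ℕ) (U : Set (En n)) : Set (ℤ × (Fin n → ℤ)) :=
  {p | ∃ x, IsGreatest (dyadicScalesInside n U x) p.1 ∧ dyadicIndex n p.1 x = p.2}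

lemma exists_isGreatest_dyadicScalesInside {n : ℕ} (hn : 1 ≤ n) {U : Set (En n)}
    (hU : IsOpen U) (hUvol : volume U ≠ ⊤) {x : En n} (hx : x ∈ U) :
    ∃ k, IsGreatest (dyadicScalesInside n U x) k := by
  obtain ⟨ε, hε, hball⟩ := Metric.isOpen_iff.1 hU x hx
  obtain ⟨k, hk⟩ := exists_dyadicCube_subset_ball x hε
  obtain ⟨b, hb⟩ := exists_forall_lt_volume_dyadicCube hn hUvol
  have hbdd : ∀ j ∈ dyadicScalesInside n U x, j ≤ b := fun j hj => by
    by_contra! hbj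
    exact (hb j hbj.le _).not_ge (measure_mono hj)
  obtain ⟨j, hj, hjmax⟩ := Int.exists_greatest_of_bdd ⟨b, hbdd⟩ ⟨k, hk.trans hball⟩
  exact ⟨j, hj, hjmax⟩

lemma biUnion_maximalDyadicCubes {n : ℕ} (hn : 1 ≤ n) {U : Set (En n)} (hU : IsOpen U)
    (hUvol : volume U ≠ ⊤) :
    ⋃ p ∈ maximalDyadicCubes n U, dyadicCube n p.1 p.2 = U := by
  refine subset_antisymm (iUnion₂_subset ?_) fun x hx => ?_
  · rintro ⟨k, m⟩ ⟨x, hk, hm⟩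
    rw [← hm]
    exact hk.1
  · obtain ⟨k, hk⟩ := exists_isGreatest_dyadicScalesInside hn hU hUvol hx
    exact mem_biUnion (x := (k, dyadicIndex n k x)) ⟨x, hk, rfl⟩ (mem_dyadicCube_iff.2 rfl)

/-- The cube of scale `q.1` around `z` is both `q` and an ancestor of `p`, so `q.1` is an admissible
scale at the point defining `p`. -/
lemma eq_of_mem_maximalDyadicCubes_of_le {n : ℕ} {U : Set (En n)} {p q : ℤ × (Fin n → ℤ)}
    (hp : p ∈ maximalDyadicCubes n U) (hq : q ∈ maximalDyadicCubes n U) (hpq : p.1 ≤ q.1)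
    {z : En n} (hzp : z ∈ dyadicCube n p.1 p.2) (hzq : z ∈ dyadicCube n q.1 q.2) : p = q := by
  obtain ⟨x, hx, hxp⟩ := hp
  obtain ⟨y, hy, hyq⟩ := hq
  rw [← hxp, mem_dyadicCube_iff] at hzp
  rw [← hyq, mem_dyadicCube_iff] at hzq
  have hxy : dyadicIndex n q.1 x = dyadicIndex n q.1 y :=
    (dyadicIndex_eq_of_le hzp hpq).symm.trans hzq
  have hqx : q.1 ∈ dyadicScalesInside n U x := by
    simpa only [dyadicScalesInside, mem_ofPred_eq, hxy] using hy.1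
  have hk : p.1 = q.1 := le_antisymm hpq (hx.2 hqx)
  ext1
  · exact hk
  · rw [← hxp, ← hyq, ← hzp, ← hzq, hk]

lemma pairwiseDisjoint_maximalDyadicCubes (n : ℕ) (U : Set (En n)) :
    (maximalDyadicCubes n U).PairwiseDisjoint fun p => dyadicCube n p.1 p.2 := by
  intro p hp q hq hne
  refine Set.disjoint_left.2 fun z hzp hzq => hne ?_
  rcases le_total p.1 q.1 with h | h
  · exact eq_of_mem_maximalDyadicCubes_of_le hp hq h hzp hzq
  · exact (eq_of_mem_maximalDyadicCubes_of_le hq hp h hzq hzp).symm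

lemma tsum_volume_maximalDyadicCubes {n : ℕ} (hn : 1 ≤ n) {U : Set (En n)} (hU : IsOpen U)
    (hUvol : volume U ≠ ⊤) :
    ∑' p : maximalDyadicCubes n U, volume (dyadicCube n p.1.1 p.1.2) = volume U := by
  conv_rhs => rw [← biUnion_maximalDyadicCubes hn hU hUvol]
  exact (measure_biUnion (to_countable _) (pairwiseDisjoint_maximalDyadicCubes n U)
    fun p _ => measurableSet_dyadicCube n p.1 p.2).symm

lemma volume_le_dyadicContent (n : ℕ) (E : Set (En n)) :
    volume E ≤ dyadicContent n n E := by
  refine le_iInf₂ fun c hc => ?_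
  calc volume E ≤ volume (⋃ i, dyadicCube n (c i).1 (c i).2) :=
        measure_mono (hc.trans interior_subset)
    _ ≤ ∑' i, volume (dyadicCube n (c i).1 (c i).2) := measure_iUnion_le _
    _ = ∑' i, ENNReal.ofReal (((2 : ℝ) ^ (c i).1) ^ (n : ℝ)) := by
        simp only [volume_dyadicCube]

lemma exists_ofReal_two_zpow_rpow_lt {δ : ℝ} (hδ : 0 < δ) {η : ℝ≥0∞} (hη : 0 < η) :
    ∃ k : ℤ, ENNReal.ofReal (((2 : ℝ) ^ k) ^ δ) < η := by
  obtain ⟨a, ha, ha_pos, haη⟩ := ENNReal.lt_iff_exists_real_btwn.1 hη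
  obtain ⟨k, hk⟩ := exists_two_zpow_lt (Real.rpow_pos_of_pos (ENNReal.ofReal_pos.1 ha_pos) δ⁻¹)
  refine ⟨k, lt_of_le_of_lt (ENNReal.ofReal_le_ofReal ?_) haη⟩
  calc ((2 : ℝ) ^ k) ^ δ ≤ (a ^ δ⁻¹) ^ δ := by gcongr
    _ = a := Real.rpow_inv_rpow ha hδ.ne'

/-- The definition of the content asks for a sequence of cubes: pad the family `S` with cubes of
arbitrarily small total weight. -/
lemma dyadicContent_le_tsum {n : ℕ} {δ : ℝ} (hδ : 0 < δ) {E : Set (En n)}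
    (S : Set (ℤ × (Fin n → ℤ))) (hE : E ⊆ interior (⋃ p ∈ S, dyadicCube n p.1 p.2)) :
    dyadicContent n δ E ≤ ∑' p : S, ENNReal.ofReal (((2 : ℝ) ^ p.1.1) ^ δ) := by
  refine ENNReal.le_of_forall_pos_le_add fun ε hε _ => ?_
  obtain ⟨η, hη, hηsum⟩ := ENNReal.exists_pos_sum_of_countable (ENNReal.coe_ne_zero.2 hε.ne') ℕ
  choose k hk using fun j => exists_ofReal_two_zpow_rpow_lt hδ (ENNReal.coe_pos.2 (hη j))
  have := Encodable.ofCountable S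
  have := Denumerable.ofEncodableOfInfinite (S ⊕ ℕ)
  let cube : S ⊕ ℕ → ℤ × (Fin n → ℤ) := Sum.elim (fun p => p.1) fun j => (k j, 0)
  let w : ℤ × (Fin n → ℤ) → ℝ≥0∞ := fun p => ENNReal.ofReal (((2 : ℝ) ^ p.1) ^ δ)
  let e := (Denumerable.eqv (S ⊕ ℕ)).symm
  have hcov : E ⊆ interior (⋃ i, dyadicCube n (cube (e i)).1 (cube (e i)).2) := by
    refine hE.trans (interior_mono (iUnion₂_subset fun p hp => ?_))
    refine subset_iUnion_of_subset (e.symm (Sum.inl ⟨p, hp⟩)) ?_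
    simp [cube]
  calc dyadicContent n δ E ≤ ∑' i, w (cube (e i)) := iInf₂_le_of_le _ hcov le_rfl
    _ = ∑' p : S, w p + ∑' j, w (k j, 0) :=
        (e.tsum_eq (w ∘ cube)).trans (ENNReal.summable.tsum_sum ENNReal.summable)
    _ ≤ ∑' p : S, w p + ε := by
        gcongr
        exact (ENNReal.tsum_le_tsum fun j => (hk j).le).trans hηsum.le

lemma dyadicContent_le_volume {n : ℕ} (hn : 1 ≤ n) (E : Set (En n)) :
    dyadicContent n n E ≤ volume E := by
  refine le_of_forall_gt_imp_ge_of_dense fun r hr => ?_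
  obtain ⟨U, hEU, hU, hUr⟩ := E.exists_isOpen_lt_of_lt r hr
  have hUvol : volume U ≠ ⊤ := (hUr.trans_le le_top).ne
  calc dyadicContent n n E
      ≤ ∑' p : maximalDyadicCubes n U, ENNReal.ofReal (((2 : ℝ) ^ p.1.1) ^ (n : ℝ)) := by
        refine dyadicContent_le_tsum (by positivity) _ ?_
        rwa [biUnion_maximalDyadicCubes hn hU hUvol, hU.interior_eq]
    _ = volume U := by
        simp only [← tsum_volume_maximalDyadicCubes hn hU hUvol, volume_dyadicCube]
    _ ≤ r := hUr.le

lemma dyadicContent_eq_volume {n : ℕ} (hn : 1 ≤ n) (E : Set (En n)) :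
    dyadicContent n n E = volume E :=
  (dyadicContent_le_volume hn E).antisymm (volume_le_dyadicContent n E)

lemma choquetIntegral_ofReal_eq_setLIntegral {n : ℕ} (hn : 1 ≤ n) {Ω : Set (En n)}
    (hΩ : MeasurableSet Ω) {h : En n → ℝ} (hm : AEMeasurable h volume) (h0 : ∀ x, 0 ≤ h x) :
    choquetIntegral n n Ω (fun x => ENNReal.ofReal (h x)) = ∫⁻ x in Ω, ENNReal.ofReal (h x) := by
  rw [lintegral_eq_lintegral_meas_lt _ (ae_of_all _ h0) hm.restrict, choquetIntegral]
  refine setLIntegral_congr_fun measurableSet_Ioi fun t (ht : 0 < t) => ?_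
  rw [dyadicContent_eq_volume hn, Measure.restrict_apply' hΩ]
  congr 1
  ext x
  simp [ENNReal.ofReal_lt_ofReal_iff_of_nonneg ht.le, and_comm]

lemma ballAvg_ofReal_eq {n : ℕ} (hn : 1 ≤ n) {h : En n → ℝ} (hm : AEMeasurable h volume)
    (h0 : ∀ x, 0 ≤ h x) (x : En n) (r : ℝ) :
    ballAvg n n (fun y => ENNReal.ofReal (h y)) x r =
      (∫⁻ y in ball x r, ENNReal.ofReal (h y)) / volume (ball x r) := by
  rw [ballAvg, choquetIntegral_ofReal_eq_setLIntegral hn measurableSet_ball hm h0,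
    dyadicContent_eq_volume hn]

lemma integrable_of_choquetIntegralAbs_lt_top {n : ℕ} (hn : 1 ≤ n) {f : En n → ℝ}
    (hm : AEMeasurable f volume) (hf : choquetIntegralAbs n n univ f < ⊤) :
    Integrable f volume := by
  rw [choquetIntegralAbs, choquetIntegral_ofReal_eq_setLIntegral hn MeasurableSet.univ hm.abs
    fun x => abs_nonneg (f x), Measure.restrict_univ] at hf
  exact ⟨hm.aestronglyMeasurable, by simpa only [HasFiniteIntegral, Real.enorm_eq_ofReal_abs]⟩

section LebesgueDifferentiation

variable {E F : Type*} [NormedAddCommGroup E] [NormedSpace ℝ E] [FiniteDimensional ℝ E]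
  [MeasurableSpace E] [BorelSpace E] (μ : Measure E) [μ.IsAddHaarMeasure]
  [NormedAddCommGroup F]

lemma ball_ae_eq_closedBall (x : E) {r : ℝ} (hr : r ≠ 0) : ball x r =ᵐ[μ] closedBall x r := by
  refine ae_eq_of_subset_of_measure_ge ball_subset_closedBall ?_
    measurableSet_ball.nullMeasurableSet measure_closedBall_lt_top.ne
  calc μ (closedBall x r) = μ (ball x r ∪ sphere x r) := by rw [ball_union_sphere]
    _ ≤ μ (ball x r) + μ (sphere x r) := measure_union_le _ _
    _ = μ (ball x r) := by rw [Measure.addHaar_sphere_of_ne_zero μ x hr, add_zero]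

lemma ae_tendsto_setLIntegral_ball_enorm_sub_div {f : E → F} (hf : LocallyIntegrable f μ) :
    ∀ᵐ x ∂μ, Tendsto (fun r => (∫⁻ y in ball x r, ‖f y - f x‖ₑ ∂μ) / μ (ball x r))
      (𝓝[>] 0) (𝓝 0) := by
  filter_upwards [(Besicovitch.vitaliFamily μ).ae_tendsto_lintegral_enorm_sub_div hf] with x hx
  refine (hx.comp (Besicovitch.tendsto_filterAt μ x)).congr' ?_
  filter_upwards [self_mem_nhdsWithin] with r (hr : 0 < r)
  rw [Function.comp_apply, setLIntegral_congr (ball_ae_eq_closedBall μ x hr.ne'),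
    measure_congr (ball_ae_eq_closedBall μ x hr.ne')]

end LebesgueDifferentiation

lemma ofReal_le_ofReal_add_enorm_sub (a b : ℝ) :
    ENNReal.ofReal a ≤ ENNReal.ofReal b + ‖a - b‖ₑ := by
  rw [Real.enorm_eq_ofReal_abs]
  calc ENNReal.ofReal a = ENNReal.ofReal (b + (a - b)) := by rw [add_sub_cancel]
    _ ≤ ENNReal.ofReal b + ENNReal.ofReal (a - b) := ENNReal.ofReal_add_le
    _ ≤ ENNReal.ofReal b + ENNReal.ofReal |a - b| := by gcongr; exact le_abs_self _

section Averages

variable {α : Type*} [MeasurableSpace α] {μ : Measure α} {s : Set α}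

lemma setLIntegral_ofReal_div_le {f : α → ℝ} (a : ℝ) :
    (∫⁻ y in s, ENNReal.ofReal (f y) ∂μ) / μ s ≤
      ENNReal.ofReal a + (∫⁻ y in s, ‖f y - a‖ₑ ∂μ) / μ s :=
  calc (∫⁻ y in s, ENNReal.ofReal (f y) ∂μ) / μ s
      ≤ (∫⁻ y in s, ENNReal.ofReal a + ‖f y - a‖ₑ ∂μ) / μ s := by
        gcongr with y; exact ofReal_le_ofReal_add_enorm_sub _ _
    _ = ENNReal.ofReal a * μ s / μ s + (∫⁻ y in s, ‖f y - a‖ₑ ∂μ) / μ s := by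
        rw [lintegral_add_left measurable_const, setLIntegral_const, ENNReal.add_div]
    _ ≤ ENNReal.ofReal a + (∫⁻ y in s, ‖f y - a‖ₑ ∂μ) / μ s := by
        rw [mul_div_assoc]; gcongr; exact mul_le_of_le_one_right' ENNReal.div_self_le_one

lemma ofReal_le_setLIntegral_ofReal_div {f : α → ℝ} (hf : AEMeasurable f μ) (a : ℝ)
    (hs₀ : μ s ≠ 0) (hs : μ s ≠ ⊤) :
    ENNReal.ofReal a ≤
      (∫⁻ y in s, ENNReal.ofReal (f y) ∂μ) / μ s + (∫⁻ y in s, ‖f y - a‖ₑ ∂μ) / μ s :=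
  calc ENNReal.ofReal a = (∫⁻ _ in s, ENNReal.ofReal a ∂μ) / μ s := by
        rw [setLIntegral_const, ENNReal.mul_div_cancel_right hs₀ hs]
    _ ≤ (∫⁻ y in s, ENNReal.ofReal (f y) + ‖f y - a‖ₑ ∂μ) / μ s := by
        gcongr with y; rw [← enorm_neg, neg_sub]; exact ofReal_le_ofReal_add_enorm_sub _ _
    _ = _ := by rw [lintegral_add_left' hf.ennreal_ofReal.restrict, ENNReal.add_div]

lemma ENNReal.tendsto_of_le_add_of_le_add {ι : Type*} {l : Filter ι} {A D : ι → ℝ≥0∞}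
    {c : ℝ≥0∞} (hD : Tendsto D l (𝓝 0)) (hle : ∀ᶠ i in l, A i ≤ c + D i)
    (hge : ∀ᶠ i in l, c ≤ A i + D i) :
    Tendsto A l (𝓝 c) := by
  have hlow : Tendsto (fun i => c - D i) l (𝓝 c) := by
    simpa using ENNReal.Tendsto.sub tendsto_const_nhds hD (Or.inr ENNReal.zero_ne_top)
  have hup : Tendsto (fun i => c + D i) l (𝓝 c) := by
    simpa using tendsto_const_nhds.add hD
  exact tendsto_of_tendsto_of_tendsto_of_le_of_le' hlow hup
    (hge.mono fun _ h => tsub_le_iff_right.2 h) hle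

lemma tendsto_setLIntegral_ofReal_div {ι : Type*} {l : Filter ι} {s : ι → Set α} {f : α → ℝ}
    (hf : AEMeasurable f μ) {a : ℝ} (hs : ∀ᶠ i in l, μ (s i) ≠ 0 ∧ μ (s i) ≠ ⊤)
    (hdev : Tendsto (fun i => (∫⁻ y in s i, ‖f y - a‖ₑ ∂μ) / μ (s i)) l (𝓝 0)) :
    Tendsto (fun i => (∫⁻ y in s i, ENNReal.ofReal (f y) ∂μ) / μ (s i)) l
      (𝓝 (ENNReal.ofReal a)) :=
  ENNReal.tendsto_of_le_add_of_le_add hdev (.of_forall fun _ => setLIntegral_ofReal_div_le a)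
    (hs.mono fun _ hi => ofReal_le_setLIntegral_ofReal_div hf a hi.1 hi.2)

end Averages

/-- Lebesgue point properties for Lebesgue measurable functions in
`nL¹(ℝⁿ, H̃^n_∞)`: `f^n_*(x) = 0` for `H̃^n_∞`-a.e. `x`, and if `f` is moreover
nonnegative, then `f(x) = limsup_{r→0⁺} f^n_{B(x,r)}` for `H̃^n_∞`-a.e. `x`. -/
theorem lebesgue_points_of_measurable (n : ℕ) (hn : 1 ≤ n) (f : En n → ℝ)
    (hf : choquetIntegralAbs n (n : ℝ) univ f < ⊤)
    (hmeas : NullMeasurable f (volume : Measure (En n))) :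
    (∃ E : Set (En n), dyadicContent n (n : ℝ) E = 0 ∧
      ∀ x ∉ E, lebDev n (n : ℝ) f x = 0) ∧
    ((∀ x, 0 ≤ f x) → ∃ E : Set (En n), dyadicContent n (n : ℝ) E = 0 ∧
      ∀ x ∉ E, ENNReal.ofReal (f x) =
        limsupAvg n (n : ℝ) (fun y => ENNReal.ofReal (f y)) x) := by
  have hm : AEMeasurable f volume := hmeas.aemeasurable
  have hint := integrable_of_choquetIntegralAbs_lt_top hn hm hf
  set E := {x | ¬ Tendsto (fun r => (∫⁻ y in ball x r, ‖f y - f x‖ₑ) / volume (ball x r))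
    (𝓝[>] 0) (𝓝 0)}
  have hE : dyadicContent n n E = 0 := by
    rw [dyadicContent_eq_volume hn]
    exact ae_tendsto_setLIntegral_ball_enorm_sub_div volume hint.locallyIntegrable
  have hdev (x : En n) (hx : x ∉ E) :
      Tendsto (fun r => ballAvg n n (fun y => ENNReal.ofReal |f y - f x|) x r) (𝓝[>] 0) (𝓝 0) := by
    simp_rw [ballAvg_ofReal_eq hn (hm.sub_const _).abs (fun y => abs_nonneg _),
      ← Real.enorm_eq_ofReal_abs]
    exact not_not.1 hx
  have hballs (x : En n) :
      ∀ᶠ r in 𝓝[>] (0 : ℝ), volume (ball x r) ≠ 0 ∧ volume (ball x r) ≠ ⊤ := by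
    filter_upwards [self_mem_nhdsWithin] with r (hr : 0 < r)
    exact ⟨(measure_ball_pos volume x hr).ne', measure_ball_lt_top.ne⟩
  refine ⟨⟨E, hE, fun x hx => (hdev x hx).limsup_eq⟩, fun hf₀ => ⟨E, hE, fun x hx => ?_⟩⟩
  refine (Tendsto.limsup_eq ?_).symm
  simp_rw [ballAvg_ofReal_eq hn hm hf₀]
  exact tendsto_setLIntegral_ofReal_div hm (hballs x) (not_not.1 hx)
end
end
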